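/- Let C ≠ 0 be real and N ≥ 0 an integer. Suppose the boundary data of the Goursat problem ∂²k/∂s∂t = C·k on [a,b]×[c,d] are polynomials k(s,c) = ∑_{n=0}^N g_n (s−a)^n and k(a,t) = ∑_{n=0}^N h_n (t−c)^n with g_0 = h_0. Then the function k(s,t) = g_0·I₀(2√(C(s−a)(t−c))) + ∑_{n=1}^N (g_n (s−a)^n + h_n (t−c)^n)·₀F₁(n+1; C(s−a)(t−c)) solves the PDE on the rectangle and matches the boundary data, where ₀F₁(a;z) = ∑_{m≥0} z^m/((a)_m m!) and I₀(2√z) is interpreted as ∑_{m≥0} z^m/(m!)² (valid also for negative z). -/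

import Mathlib

/-!
Write `u = s - a`, `v = t - c` and `F n = ₀F₁(n + 1; ·)`. Termwise differentiation gives
`F n' = F (n + 1) / (n + 1)`, and comparing coefficients gives the contiguous relation
`F n z = F (n + 1) z + z F (n + 2) z / ((n + 1) (n + 2))`. With these two facts the chain rule shows
that each of `uⁿ F n (C u v)` and, for `n ≥ 1`, `vⁿ F n (C u v)` solves `∂²k/∂s∂t = C k` by itself;
the solutions form a vector space, so `k` is one. On the characteristics `u = 0` and `v = 0` every
`F n` equals `1`, which leaves exactly the boundary polynomials.
-/

open Set

/-- `₀F₁(n + 1; z)`: indexing by `n` rather than by the parameter `n + 1` keeps every rising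
factorial positive. -/
noncomputable def hyp0F1 (n : ℕ) (z : ℝ) : ℝ :=
  ∑' m : ℕ, z ^ m / ((Nat.ascFactorial (n + 1) m : ℝ) * m.factorial)

lemma ascFactorial_succ_mul_factorial_succ (n m : ℕ) :
    (n + 1).ascFactorial (m + 1) * (m + 1).factorial =
      (m + 1) * ((n + 1) * ((n + 2).ascFactorial m * m.factorial)) := by
  rw [Nat.ascFactorial_succ, ← Nat.succ_ascFactorial, Nat.factorial_succ]
  ring

lemma ascFactorial_mul_factorial_pos (n m : ℕ) :
    (0 : ℝ) < (n + 1).ascFactorial m * m.factorial := by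
  have := Nat.ascFactorial_pos n m
  positivity

lemma summable_hyp0F1 (n : ℕ) (z : ℝ) :
    Summable fun m : ℕ => z ^ m / ((n + 1).ascFactorial m * m.factorial : ℝ) := by
  refine .of_norm_bounded (Real.summable_pow_div_factorial |z|) fun m => ?_
  have hA : (1 : ℝ) ≤ (n + 1).ascFactorial m := mod_cast Nat.ascFactorial_pos n m
  rw [Real.norm_eq_abs, abs_div, abs_pow, abs_of_pos (ascFactorial_mul_factorial_pos n m)]
  gcongr
  exact le_mul_of_one_le_left (Nat.cast_nonneg _) hA

lemma hasSum_hyp0F1_derivSeries (n : ℕ) (z : ℝ) :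
    HasSum (fun m : ℕ => (m : ℝ) * z ^ (m - 1) / ((n + 1).ascFactorial m * m.factorial : ℝ))
      (hyp0F1 (n + 1) z / (n + 1)) := by
  rw [← hasSum_nat_add_iff' 1]
  simp only [Finset.range_one, Finset.sum_singleton, CharP.cast_eq_zero, zero_mul, zero_div,
    sub_zero, Nat.add_sub_cancel]
  refine ((summable_hyp0F1 (n + 1) z).hasSum.div_const _).congr_fun fun m => ?_
  have key : ((n + 1).ascFactorial (m + 1) * (m + 1).factorial : ℝ) =
      (m + 1) * ((n + 1) * ((n + 2).ascFactorial m * m.factorial)) :=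
    mod_cast ascFactorial_succ_mul_factorial_succ n m
  have := ascFactorial_mul_factorial_pos (n + 1) m
  push_cast [key]
  field_simp

lemma hasDerivAt_hyp0F1 (n : ℕ) (z : ℝ) :
    HasDerivAt (hyp0F1 n) (hyp0F1 (n + 1) z / (n + 1)) z := by
  set R := |z| + 1
  have hz : z ∈ Metric.ball (0 : ℝ) R := by simp [R]
  rw [← (hasSum_hyp0F1_derivSeries n z).tsum_eq]
  refine hasDerivAt_tsum_of_isPreconnected (hasSum_hyp0F1_derivSeries n R).summable
    Metric.isOpen_ball (convex_ball 0 R).isPreconnected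
    (fun m y _ => (hasDerivAt_pow m y).div_const _) (fun m y hy => ?_) hz
    (summable_hyp0F1 n z) hz
  have hy : |y| ≤ R := by simpa using (Metric.mem_ball.1 hy).le
  rw [Real.norm_eq_abs, abs_div, abs_mul, abs_of_pos (ascFactorial_mul_factorial_pos n m),
    Nat.abs_cast, abs_pow]
  gcongr

@[simp]
lemma hyp0F1_eval_zero (n : ℕ) : hyp0F1 n 0 = 1 := by
  rw [hyp0F1, tsum_eq_single 0 fun m hm => by rw [zero_pow hm, zero_div]]
  simp

lemma hyp0F1_zero_eq_tsum (z : ℝ) :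
    hyp0F1 0 z = ∑' m : ℕ, z ^ m / (m.factorial : ℝ) ^ 2 := by
  simp [hyp0F1, sq]

lemma hyp0F1_contiguous (n : ℕ) (z : ℝ) :
    hyp0F1 n z = hyp0F1 (n + 1) z + z * hyp0F1 (n + 2) z / ((n + 1) * (n + 2)) := by
  have hsum : HasSum _ (hyp0F1 (n + 1) z + z / (n + 1) * (hyp0F1 (n + 2) z / ((n + 1 : ℕ) + 1))) :=
    (summable_hyp0F1 (n + 1) z).hasSum.add
      ((hasSum_hyp0F1_derivSeries (n + 1) z).mul_left (z / (n + 1)))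
  refine (hsum.congr_fun fun m => ?_).tsum_eq.trans ?_
  · have key : ((n + 1 : ℕ) * (n + 1 + 1).ascFactorial m : ℝ) =
        (n + 1 + m) * (n + 1).ascFactorial m :=
      mod_cast Nat.succ_ascFactorial (n + 1) m
    have := ascFactorial_mul_factorial_pos n m
    have := ascFactorial_mul_factorial_pos (n + 1) m
    rcases m with _ | m
    · simp
    push_cast at key ⊢
    field_simp
    linear_combination z * z ^ m * key
  · push_cast
    field_simp
    ring

def goursatSolutions (C : ℝ) : Submodule ℝ (ℝ → ℝ → ℝ) where
  carrier := {f | ∃ D : ℝ → ℝ → ℝ,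
    ∀ s t, HasDerivAt (f s ·) (D s t) t ∧ HasDerivAt (D · t) (C * f s t) s}
  zero_mem' := ⟨0, fun s t => ⟨hasDerivAt_const t 0, by simpa using hasDerivAt_const s (0 : ℝ)⟩⟩
  add_mem' := by
    rintro f₁ f₂ ⟨D₁, hD₁⟩ ⟨D₂, hD₂⟩
    refine ⟨D₁ + D₂, fun s t => ⟨(hD₁ s t).1.add (hD₂ s t).1, ?_⟩⟩
    exact ((hD₁ s t).2.fun_add (hD₂ s t).2).congr_deriv (mul_add _ _ _).symm
  smul_mem' := by
    rintro r f ⟨D, hD⟩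
    refine ⟨r • D, fun s t => ⟨(hD s t).1.const_mul r, ?_⟩⟩
    simpa [mul_left_comm] using (hD s t).2.const_mul r

lemma deriv_deriv_eq_of_mem_goursatSolutions {C : ℝ} {f : ℝ → ℝ → ℝ}
    (hf : f ∈ goursatSolutions C) (s t : ℝ) :
    deriv (fun s' => deriv (fun t' => f s' t') t) s = C * f s t := by
  obtain ⟨D, hD⟩ := hf
  simp_rw [fun s' => (hD s' t).1.deriv]
  exact (hD s t).2.deriv

lemma comp_sub_mem_goursatSolutions {C : ℝ} {f : ℝ → ℝ → ℝ}
    (hf : f ∈ goursatSolutions C) (a c : ℝ) :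
    (fun s t => f (s - a) (t - c)) ∈ goursatSolutions C := by
  obtain ⟨D, hD⟩ := hf
  exact ⟨fun s t => D (s - a) (t - c), fun s t =>
    ⟨(hD (s - a) (t - c)).1.comp_sub_const t c, (hD (s - a) (t - c)).2.comp_sub_const s a⟩⟩

lemma hasDerivAt_hyp0F1_mul_mul_left (n : ℕ) (C u v : ℝ) :
    HasDerivAt (fun u' => hyp0F1 n (C * u' * v))
      (hyp0F1 (n + 1) (C * u * v) / (n + 1) * (C * v)) u := by
  refine (hasDerivAt_hyp0F1 n _).comp u ?_
  simpa using ((hasDerivAt_id u).const_mul C).mul_const v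

lemma hasDerivAt_hyp0F1_mul_mul_right (n : ℕ) (C u v : ℝ) :
    HasDerivAt (fun v' => hyp0F1 n (C * u * v'))
      (hyp0F1 (n + 1) (C * u * v) / (n + 1) * (C * u)) v := by
  refine (hasDerivAt_hyp0F1 n _).comp v ?_
  simpa using (hasDerivAt_id v).const_mul (C * u)

lemma pow_fst_mul_hyp0F1_mem_goursatSolutions (C : ℝ) (n : ℕ) :
    (fun u v => u ^ n * hyp0F1 n (C * u * v)) ∈ goursatSolutions C := by
  refine ⟨fun u v => C * u ^ (n + 1) * hyp0F1 (n + 1) (C * u * v) / (n + 1), fun u v => ⟨?_, ?_⟩⟩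
  · refine ((hasDerivAt_hyp0F1_mul_mul_right n C u v).const_mul (u ^ n)).congr_deriv ?_
    ring
  · refine ((((hasDerivAt_pow (n + 1) u).const_mul C).mul
      (hasDerivAt_hyp0F1_mul_mul_left (n + 1) C u v)).div_const ((n : ℝ) + 1)).congr_deriv ?_
    beta_reduce
    rw [hyp0F1_contiguous n]
    push_cast
    field_simp
    ring

lemma pow_snd_mul_hyp0F1_mem_goursatSolutions (C : ℝ) {n : ℕ} (hn : n ≠ 0) :
    (fun u v => v ^ n * hyp0F1 n (C * u * v)) ∈ goursatSolutions C := by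
  obtain ⟨n, rfl⟩ := Nat.exists_eq_add_one_of_ne_zero hn
  refine ⟨fun u v => (n + 1) * v ^ n * hyp0F1 n (C * u * v), fun u v => ⟨?_, ?_⟩⟩
  · refine ((hasDerivAt_pow (n + 1) v).mul
      (hasDerivAt_hyp0F1_mul_mul_right (n + 1) C u v)).congr_deriv ?_
    beta_reduce
    rw [hyp0F1_contiguous n]
    push_cast
    field_simp
    ring
  · refine ((hasDerivAt_hyp0F1_mul_mul_left n C u v).const_mul
      (((n : ℝ) + 1) * v ^ n)).congr_deriv ?_
    field_simp
    ring

lemma Finset.sum_range_succ_eq_add_sum_Icc {M : Type*} [AddCommMonoid M] (f : ℕ → M) (N : ℕ) :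
    ∑ n ∈ Finset.range (N + 1), f n = f 0 + ∑ n ∈ Finset.Icc 1 N, f n := by
  rw [Nat.range_succ_eq_Icc_zero, Finset.Icc_eq_cons_Ioc N.zero_le, Finset.sum_cons,
    ← Finset.Icc_add_one_left_eq_Ioc, zero_add]

theorem goursat_polynomial_boundary_solution_general
    (C a b c d : ℝ)
    (N : ℕ) (g h : ℕ → ℝ) (hgh : g 0 = h 0)
    (k : ℝ → ℝ → ℝ)
    (hk : ∀ s t : ℝ, k s t =
      g 0 * (∑' m : ℕ, (C * (s - a) * (t - c)) ^ m / ((m.factorial : ℝ)) ^ 2) +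
      ∑ n ∈ Finset.Icc 1 N,
        (g n * (s - a) ^ n + h n * (t - c) ^ n) *
          ∑' m : ℕ, (C * (s - a) * (t - c)) ^ m /
            ((Nat.ascFactorial (n + 1) m : ℝ) * (m.factorial : ℝ))) :
    (∀ s ∈ Icc a b, ∀ t ∈ Icc c d,
        deriv (fun s' => deriv (fun t' => k s' t') t) s = C * k s t) ∧
    (∀ s ∈ Icc a b, k s c = ∑ n ∈ Finset.range (N + 1), g n * (s - a) ^ n) ∧
    (∀ t ∈ Icc c d, k a t = ∑ n ∈ Finset.range (N + 1), h n * (t - c) ^ n) := by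
  have hk' : ∀ s t, k s t = g 0 * hyp0F1 0 (C * (s - a) * (t - c)) + ∑ n ∈ Finset.Icc 1 N,
      (g n * (s - a) ^ n + h n * (t - c) ^ n) * hyp0F1 n (C * (s - a) * (t - c)) :=
    fun s t => by rw [hk, hyp0F1_zero_eq_tsum]; rfl
  have hpos : ∀ n ∈ Finset.Icc 1 N, n ≠ 0 := fun n hn => by grind
  have hsol : k ∈ goursatSolutions C := by
    convert add_mem
      (Submodule.smul_mem _ (g 0)
        (comp_sub_mem_goursatSolutions (pow_fst_mul_hyp0F1_mem_goursatSolutions C 0) a c))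
      (Submodule.sum_mem _ fun n hn => add_mem
        (Submodule.smul_mem _ (g n)
          (comp_sub_mem_goursatSolutions (pow_fst_mul_hyp0F1_mem_goursatSolutions C n) a c))
        (Submodule.smul_mem _ (h n)
          (comp_sub_mem_goursatSolutions (pow_snd_mul_hyp0F1_mem_goursatSolutions C
            (hpos n hn)) a c)))
    funext s t
    simp [hk', Finset.sum_apply, add_mul, mul_assoc]
  refine ⟨fun s _ t _ => deriv_deriv_eq_of_mem_goursatSolutions hsol s t, fun s _ => ?_,
    fun t _ => ?_⟩
  · rw [hk', Finset.sum_range_succ_eq_add_sum_Icc]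
    simp only [sub_self, mul_zero, hyp0F1_eval_zero, mul_one, pow_zero, add_right_inj]
    exact Finset.sum_congr rfl fun n hn => by simp [zero_pow (hpos n hn)]
  · rw [hk', Finset.sum_range_succ_eq_add_sum_Icc, hgh]
    simp only [sub_self, mul_zero, zero_mul, hyp0F1_eval_zero, mul_one, pow_zero, add_right_inj]
    exact Finset.sum_congr rfl fun n hn => by simp [zero_pow (hpos n hn)]

theorem goursat_polynomial_boundary_solution
    (C a b c d : ℝ) (hC : C ≠ 0) (hab : a < b) (hcd : c < d)
    (N : ℕ) (g h : ℕ → ℝ) (hgh : g 0 = h 0)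
    (k : ℝ → ℝ → ℝ)
    (hk : ∀ s t : ℝ, k s t =
      g 0 * (∑' m : ℕ, (C * (s - a) * (t - c)) ^ m / ((m.factorial : ℝ)) ^ 2) +
      ∑ n ∈ Finset.Icc 1 N,
        (g n * (s - a) ^ n + h n * (t - c) ^ n) *
          ∑' m : ℕ, (C * (s - a) * (t - c)) ^ m /
            ((Nat.ascFactorial (n + 1) m : ℝ) * (m.factorial : ℝ))) :
    (∀ s ∈ Icc a b, ∀ t ∈ Icc c d,
        deriv (fun s' => deriv (fun t' => k s' t') t) s = C * k s t) ∧
    (∀ s ∈ Icc a b, k s c = ∑ n ∈ Finset.range (N + 1), g n * (s - a) ^ n) ∧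
    (∀ t ∈ Icc c d, k a t = ∑ n ∈ Finset.range (N + 1), h n * (t - c) ^ n) :=
  goursat_polynomial_boundary_solution_general C a b c d N g h hgh k hk
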